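/- Define ω(A) = i^{p₄(A)} · e^{−2πi·p₃(A)/3} for A = [[a,b],[c,d]] ∈ SL₂(ℤ), where p₃(A) = ac(b²+1) + bd(a²+1) and p₄(A) = (b²−a+2)c + (a²−b+2)d + ad. Then ω is a group homomorphism from SL₂(ℤ) to the multiplicative group of nonzero complex numbers: for all A, B ∈ SL₂(ℤ), ω(AB) = ω(A)·ω(B). Moreover ω(T) = e^{πi/6} for T = [[1,1],[0,1]] and ω(S) = e^{−πi/2} for S = [[0,−1],[1,0]]. -/
import Mathlib


open Complex Real

/-- `p₃(A) = ac(b²+1) + bd(a²+1)` for `A = [[a,b],[c,d]]`. -/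
def p3 (a b c d : ℤ) : ℤ := a * c * (b ^ 2 + 1) + b * d * (a ^ 2 + 1)

/-- `p₄(A) = (b²-a+2)c + (a²-b+2)d + ad` for `A = [[a,b],[c,d]]`. -/
def p4 (a b c d : ℤ) : ℤ := (b ^ 2 - a + 2) * c + (a ^ 2 - b + 2) * d + a * d

/-- Herglotz's multiplier `ω(A) = i^{p₄(A)}·e^{-2πi·p₃(A)/3}`. -/
noncomputable def omegaSL (a b c d : ℤ) : ℂ :=
  I ^ (p4 a b c d) * Complex.exp (-(2 * (π : ℂ) * I * ((p3 a b c d : ℤ) : ℂ)) / 3)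

set_option maxRecDepth 10000 in
lemma aux3 : ∀ a b c d a' b' c' d' : ZMod 3,
    a*d - b*c = 1 → a'*d' - b'*c' = 1 →
    (a*a'+b*c')*(c*a'+d*c')*((a*b'+b*d')^2+1) + (a*b'+b*d')*(c*b'+d*d')*((a*a'+b*c')^2+1)
      = (a*c*(b^2+1) + b*d*(a^2+1)) + (a'*c'*(b'^2+1) + b'*d'*(a'^2+1)) := by decide

set_option maxHeartbeats 4000000 in
set_option maxRecDepth 40000 in
lemma aux4 : ∀ a b c d a' b' c' d' : ZMod 4,
    a*d - b*c = 1 → a'*d' - b'*c' = 1 →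
    ((a*b'+b*d')^2 - (a*a'+b*c') + 2)*(c*a'+d*c') + ((a*a'+b*c')^2 - (a*b'+b*d') + 2)*(c*b'+d*d')
        + (a*a'+b*c')*(c*b'+d*d')
      = ((b^2-a+2)*c + (a^2-b+2)*d + a*d) + ((b'^2-a'+2)*c' + (a'^2-b'+2)*d' + a'*d') := by decide

lemma exp_pi_I_div_two : Complex.exp ((π : ℂ) * I / 2) = I := by
  rw [show (π : ℂ) * I / 2 = ((π / 2 : ℝ) : ℂ) * I by push_cast; ring, Complex.exp_mul_I,
    ← Complex.ofReal_cos, ← Complex.ofReal_sin, Real.cos_pi_div_two, Real.sin_pi_div_two]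
  simp

lemma omegaSL_eq (a b c d : ℤ) :
    omegaSL a b c d =
      Complex.exp ((π : ℂ) * I * ((3 * p4 a b c d - 4 * p3 a b c d : ℤ) : ℂ) / 6) := by
  have hI : I ^ (p4 a b c d) = Complex.exp (((p4 a b c d : ℤ) : ℂ) * ((π : ℂ) * I / 2)) := by
    rw [Complex.exp_int_mul, exp_pi_I_div_two]
  rw [omegaSL, hI, ← Complex.exp_add]
  congr 1
  push_cast
  ring

lemma exp_cong (x y : ℤ) (h : (12 : ℤ) ∣ x - y) :
    Complex.exp ((π : ℂ) * I * (x : ℂ) / 6) = Complex.exp ((π : ℂ) * I * (y : ℂ) / 6) := by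
  obtain ⟨k, hk⟩ := h
  have hx : (x : ℂ) = (y : ℂ) + 12 * (k : ℂ) := by
    have : x = y + 12 * k := by omega
    rw [this]; push_cast; ring
  rw [hx, show (π : ℂ) * I * ((y : ℂ) + 12 * (k : ℂ)) / 6
      = (π : ℂ) * I * (y : ℂ) / 6 + (k : ℤ) * (2 * π * I) by push_cast; ring,
    Complex.exp_add, Complex.exp_int_mul, Complex.exp_two_pi_mul_I, one_zpow, mul_one]

/-- `ω` is a group homomorphism from `SL₂(ℤ)` to `ℂ*`, with `ω(T) = e^{πi/6}` and
`ω(S) = e^{-πi/2}`. -/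
theorem omegaSL_mul_and_values :
    (∀ a b c d a' b' c' d' : ℤ, a * d - b * c = 1 → a' * d' - b' * c' = 1 →
      omegaSL (a * a' + b * c') (a * b' + b * d') (c * a' + d * c') (c * b' + d * d') =
        omegaSL a b c d * omegaSL a' b' c' d') ∧
    omegaSL 1 1 0 1 = Complex.exp ((π : ℂ) * I / 6) ∧
    omegaSL 0 (-1) 1 0 = Complex.exp (-((π : ℂ) * I) / 2) := by
  refine ⟨?_, ?_, ?_⟩
  · intro a b c d a' b' c' d' h h'
    -- p4 congruence mod 4
    have h4z : ((a : ZMod 4)) * d - b * c = 1 := by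
      have := congrArg (fun x : ℤ => (x : ZMod 4)) h; push_cast at this; exact this
    have h4z' : ((a' : ZMod 4)) * d' - b' * c' = 1 := by
      have := congrArg (fun x : ℤ => (x : ZMod 4)) h'; push_cast at this; exact this
    have h3z : ((a : ZMod 3)) * d - b * c = 1 := by
      have := congrArg (fun x : ℤ => (x : ZMod 3)) h; push_cast at this; exact this
    have h3z' : ((a' : ZMod 3)) * d' - b' * c' = 1 := by
      have := congrArg (fun x : ℤ => (x : ZMod 3)) h'; push_cast at this; exact this
    have c4 : (4 : ℤ) ∣ (p4 a b c d + p4 a' b' c' d')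
        - p4 (a * a' + b * c') (a * b' + b * d') (c * a' + d * c') (c * b' + d * d') := by
      have key := aux4 (a : ZMod 4) b c d a' b' c' d' h4z h4z'
      have : ((p4 (a * a' + b * c') (a * b' + b * d') (c * a' + d * c') (c * b' + d * d')
          : ℤ) : ZMod 4) = ((p4 a b c d + p4 a' b' c' d' : ℤ) : ZMod 4) := by
        simp only [p4]; push_cast; linear_combination key
      exact (ZMod.intCast_eq_intCast_iff _ _ _).mp this |>.dvd
    have c3 : (3 : ℤ) ∣ (p3 a b c d + p3 a' b' c' d')
        - p3 (a * a' + b * c') (a * b' + b * d') (c * a' + d * c') (c * b' + d * d') := by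
      have key := aux3 (a : ZMod 3) b c d a' b' c' d' h3z h3z'
      have : ((p3 (a * a' + b * c') (a * b' + b * d') (c * a' + d * c') (c * b' + d * d')
          : ℤ) : ZMod 3) = ((p3 a b c d + p3 a' b' c' d' : ℤ) : ZMod 3) := by
        simp only [p3]; push_cast; linear_combination key
      exact (ZMod.intCast_eq_intCast_iff _ _ _).mp this |>.dvd
    rw [omegaSL_eq, omegaSL_eq, omegaSL_eq, ← Complex.exp_add]
    rw [show (π : ℂ) * I * ((3 * p4 a b c d - 4 * p3 a b c d : ℤ) : ℂ) / 6
        + (π : ℂ) * I * ((3 * p4 a' b' c' d' - 4 * p3 a' b' c' d' : ℤ) : ℂ) / 6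
      = (π : ℂ) * I * (((3 * p4 a b c d - 4 * p3 a b c d)
        + (3 * p4 a' b' c' d' - 4 * p3 a' b' c' d') : ℤ) : ℂ) / 6 by push_cast; ring]
    apply exp_cong
    omega
  · rw [omegaSL_eq]
    have h4 : p4 1 1 0 1 = 3 := by decide
    have h3 : p3 1 1 0 1 = 2 := by decide
    rw [h4, h3]
    norm_num
  · rw [omegaSL_eq]
    have h4 : p4 0 (-1) 1 0 = 3 := by decide
    have h3 : p3 0 (-1) 1 0 = 0 := by decide
    rw [h4, h3]
    rw [show ((3 * 3 - 4 * 0 : ℤ) : ℂ) = ((9 : ℤ) : ℂ) by norm_num,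
      exp_cong 9 (-3) (by norm_num)]
    congr 1
    push_cast
    ring
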